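/- arXiv:2007.02323 — 3 statements merged into one kernel-verified Lean document; each statement's English description precedes it below -/
import Mathlib

section
/- Let n be a positive integer, T > 0, and let 0 = θ₀ ≤ θ₁ ≤ ⋯ ≤ θₙ be real numbers. For γ ∈ [0, T] define φ̃ₙ(γ) = min(n, min{k : θₖ ≥ γ}) if γ < T (equal to n if the set is empty), and φ̃ₙ(T) = n. Then for every γ ∈ [0, T], |γ − θ_{φ̃ₙ(γ)}| ≤ |T − θₙ| + max_{1 ≤ k ≤ n} (θₖ − θ_{k−1}). -/
/-!
Let `k` be the first index `≤ n` with `γ ≤ θ k`. If it exists and `k > 0`, then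
`θ (k - 1) < γ ≤ θ k`, so `γ` is within one gap `θ k - θ (k - 1)` of `θ k`; if `k = 0`
then `γ = 0 = θ 0`. If no such index exists, then `θ n < γ ≤ T` and the error is at most
`T - θ n`.
-/

open Finset

namespace Skorokhod

variable {θ : ℕ → ℝ} {n : ℕ} {γ : ℝ}

/-- The paper's `φ̃ₙ(γ)` for `γ < T`. -/
noncomputable def crossingIndex (θ : ℕ → ℝ) (n : ℕ) (γ : ℝ) : ℕ :=
  sInf ({k | k ≤ n ∧ γ ≤ θ k} ∪ {n})

theorem crossingIndex_le : crossingIndex θ n γ ≤ n :=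
  Nat.sInf_le (Or.inr rfl)

theorem lt_of_lt_crossingIndex {j : ℕ} (hj : j < crossingIndex θ n γ) : θ j < γ := by
  by_contra hγj
  exact Nat.notMem_of_lt_sInf hj
    (Or.inl ⟨(hj.trans_le crossingIndex_le).le, not_lt.mp hγj⟩)

theorem crossingIndex_eq_of_lt (h : θ (crossingIndex θ n γ) < γ) :
    crossingIndex θ n γ = n := by
  rcases Nat.sInf_mem (⟨n, Or.inr rfl⟩ : ({k | k ≤ n ∧ γ ≤ θ k} ∪ {n} : Set ℕ).Nonempty)
    with hk | hk
  · exact absurd hk.2 h.not_ge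
  · exact hk

noncomputable def maxGap (θ : ℕ → ℝ) (n : ℕ) (hn : 1 ≤ n) : ℝ :=
  (Icc 1 n).sup' (nonempty_Icc.mpr hn) (fun k => θ k - θ (k - 1))

theorem sub_le_maxGap (hn : 1 ≤ n) {k : ℕ} (hk : 1 ≤ k) (hkn : k ≤ n) :
    θ k - θ (k - 1) ≤ maxGap θ n hn :=
  le_sup' (fun k => θ k - θ (k - 1)) (mem_Icc.mpr ⟨hk, hkn⟩)

theorem maxGap_nonneg (hn : 1 ≤ n) (h01 : θ 0 ≤ θ 1) : 0 ≤ maxGap θ n hn :=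
  (sub_nonneg.mpr h01).trans (sub_le_maxGap hn le_rfl hn)

theorem abs_sub_crossingIndex_le_maxGap (hn : 1 ≤ n) (hθ0 : θ 0 = 0) (h01 : θ 0 ≤ θ 1)
    (hγ0 : 0 ≤ γ) (hγ : γ ≤ θ (crossingIndex θ n γ)) :
    |γ - θ (crossingIndex θ n γ)| ≤ maxGap θ n hn := by
  set k := crossingIndex θ n γ
  rw [abs_sub_comm, abs_of_nonneg (sub_nonneg.mpr hγ)]
  rcases Nat.eq_zero_or_pos k with hk | hk
  · rw [hk, hθ0] at hγ ⊢
    linarith [maxGap_nonneg hn h01]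
  · have hprev : θ (k - 1) < γ := lt_of_lt_crossingIndex (Nat.sub_lt hk one_pos)
    linarith [sub_le_maxGap (θ := θ) hn hk crossingIndex_le]

theorem abs_sub_le_abs_sub_of_lt_of_le {a γ T : ℝ} (ha : a < γ) (hγT : γ ≤ T) :
    |γ - a| ≤ |T - a| := by
  rw [abs_of_pos (sub_pos.mpr ha)]
  exact (sub_le_sub_right hγT a).trans (le_abs_self _)

end Skorokhod

open Skorokhod in
theorem stmt5_general (n : ℕ) (hn : 1 ≤ n) (T : ℝ)
    (θ : ℕ → ℝ) (hθ0 : θ 0 = 0)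
    (hmono : ∀ k, k < n → θ k ≤ θ (k + 1))
    (γ : ℝ) (hγ : γ ∈ Set.Icc 0 T)
    (φt : ℕ) (hφt : φt = if γ < T then sInf ({k | k ≤ n ∧ γ ≤ θ k} ∪ {n}) else n) :
    |γ - θ φt| ≤ |T - θ n| +
      (Finset.Icc 1 n).sup' (Finset.nonempty_Icc.mpr hn)
        (fun k => θ k - θ (k - 1)) := by
  obtain ⟨hγ0, hγT⟩ := hγ
  have h01 : θ 0 ≤ θ 1 := hmono 0 hn
  have hgap : 0 ≤ maxGap θ n hn := maxGap_nonneg hn h01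
  change |γ - θ φt| ≤ |T - θ n| + maxGap θ n hn
  split_ifs at hφt with hlt
  · change φt = crossingIndex θ n γ at hφt
    subst hφt
    rcases le_or_gt γ (θ (crossingIndex θ n γ)) with hcross | hmiss
    · linarith [abs_sub_crossingIndex_le_maxGap hn hθ0 h01 hγ0 hcross, abs_nonneg (T - θ n)]
    · have hlast := crossingIndex_eq_of_lt hmiss
      rw [hlast] at hmiss ⊢
      linarith [abs_sub_le_abs_sub_of_lt_of_le hmiss hγT]
  · rw [hφt, le_antisymm hγT (not_lt.mp hlt)]
    linarith

/-- For `0 = θ₀ ≤ θ₁ ≤ ⋯ ≤ θₙ`, `γ ∈ [0,T]` and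
`φ̃ₙ(γ) = min(n, min{k : θₖ ≥ γ})` if `γ < T` (equal to `n` if empty) with
`φ̃ₙ(T) = n`, we have
`|γ − θ_{φ̃ₙ(γ)}| ≤ |T − θₙ| + max_{1 ≤ k ≤ n} (θₖ − θ_{k−1})`. -/
theorem stmt5 (n : ℕ) (hn : 1 ≤ n) (T : ℝ) (hT : 0 < T)
    (θ : ℕ → ℝ) (hθ0 : θ 0 = 0)
    (hmono : ∀ k, k < n → θ k ≤ θ (k + 1))
    (γ : ℝ) (hγ : γ ∈ Set.Icc 0 T)
    (φt : ℕ) (hφt : φt = if γ < T then sInf ({k | k ≤ n ∧ γ ≤ θ k} ∪ {n}) else n) :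
    |γ - θ φt| ≤ |T - θ n| +
      (Finset.Icc 1 n).sup' (Finset.nonempty_Icc.mpr hn)
        (fun k => θ k - θ (k - 1)) :=
  stmt5_general n hn T θ hθ0 hmono γ hγ φt hφt
end

section
/- Let b > 0 and 0 < A ≤ b. Then (1 − e^{−A})(e^{A} − 1)(1 + e^{b}) ≤ (e^{A} − e^{−A})(e^{b} − 1). Consequently, setting p¹ = ((1 − e^{−A})(e^{A} − 1)) / ((e^{A} − e^{−A})(e^{b} − 1)), p^{−1} = e^{b} p¹ and p⁰ = 1 − p¹ − p^{−1}, each of p¹, p^{−1}, p⁰ lies in [0, 1] and p¹ + p^{−1} + p⁰ = 1, so they form a valid probability vector. -/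
/-! With `x = e^A` and `y = e^b`, multiplying the inequality by `x` and cancelling the common
factor `x - 1` reduces it to `x ≤ y`. Hence `p¹ (1 + e^b) ≤ 1`, i.e. `p¹ + p^{−1} ≤ 1`, which is
all that is needed for `(p¹, p^{−1}, p⁰)` to be a probability vector. -/

open Real Set

lemma one_sub_inv_mul_sub_one_mul_one_add_le {x y : ℝ} (hx : 1 < x) (hxy : x ≤ y) :
    (1 - x⁻¹) * (x - 1) * (1 + y) ≤ (x - x⁻¹) * (y - 1) := by
  have hx₀ : x ≠ 0 := by positivity
  have hgap : (x - x⁻¹) * (y - 1) - (1 - x⁻¹) * (x - 1) * (1 + y) = 2 * (1 - x⁻¹) * (y - x) := by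
    field_simp
    ring
  have hinv : x⁻¹ < 1 := inv_lt_one_of_one_lt₀ hx
  linarith [hgap, mul_nonneg (sub_nonneg.mpr hinv.le) (sub_nonneg.mpr hxy)]

lemma mem_Icc_of_add_le_one {p q : ℝ} (hp : 0 ≤ p) (hq : 0 ≤ q) (hpq : p + q ≤ 1) :
    p ∈ Icc 0 1 ∧ q ∈ Icc 0 1 ∧ 1 - p - q ∈ Icc 0 1 :=
  ⟨⟨hp, by linarith⟩, ⟨hq, by linarith⟩, ⟨by linarith, by linarith⟩⟩

theorem stmt6_general (b A : ℝ) (hA : 0 < A) (hAb : A ≤ b) :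
    (1 - Real.exp (-A)) * (Real.exp A - 1) * (1 + Real.exp b)
      ≤ (Real.exp A - Real.exp (-A)) * (Real.exp b - 1) ∧
    ∀ p1 pm1 p0 : ℝ,
      p1 = (1 - Real.exp (-A)) * (Real.exp A - 1) /
        ((Real.exp A - Real.exp (-A)) * (Real.exp b - 1)) →
      pm1 = Real.exp b * p1 →
      p0 = 1 - p1 - pm1 →
      p1 ∈ Set.Icc (0 : ℝ) 1 ∧ pm1 ∈ Set.Icc (0 : ℝ) 1 ∧ p0 ∈ Set.Icc (0 : ℝ) 1 ∧
        p1 + pm1 + p0 = 1 := by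
  have hx : 1 < exp A := one_lt_exp_iff.mpr hA
  have hy : 1 < exp b := one_lt_exp_iff.mpr (hA.trans_le hAb)
  have hinv : (exp A)⁻¹ < 1 := inv_lt_one_of_one_lt₀ hx
  have key := one_sub_inv_mul_sub_one_mul_one_add_le hx (exp_le_exp.mpr hAb)
  rw [← exp_neg] at key hinv
  refine ⟨key, fun p1 pm1 p0 hp1 hpm1 hp0 => ?_⟩
  have hden : 0 < (exp A - exp (-A)) * (exp b - 1) := by
    apply mul_pos <;> linarith
  have hp1_nonneg : 0 ≤ p1 := hp1 ▸ div_nonneg (mul_nonneg (by linarith) (by linarith)) hden.le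
  have hsum : p1 + pm1 ≤ 1 := by
    rw [hpm1, ← one_add_mul, mul_comm, hp1, div_mul_eq_mul_div, div_le_one hden]
    exact key
  obtain ⟨h1, hm1, h0⟩ :=
    mem_Icc_of_add_le_one hp1_nonneg (hpm1 ▸ by positivity) hsum
  subst hp0
  exact ⟨h1, hm1, h0, by ring⟩

/-- For `0 < A ≤ b`,
`(1 − e^{−A})(e^{A} − 1)(1 + e^{b}) ≤ (e^{A} − e^{−A})(e^{b} − 1)`; consequently
`p¹ = ((1 − e^{−A})(e^{A} − 1)) / ((e^{A} − e^{−A})(e^{b} − 1))`,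
`p^{−1} = e^{b} p¹` and `p⁰ = 1 − p¹ − p^{−1}` all lie in `[0,1]` and sum to `1`,
so they form a valid probability vector. -/
theorem stmt6 (b A : ℝ) (hb : 0 < b) (hA : 0 < A) (hAb : A ≤ b) :
    (1 - Real.exp (-A)) * (Real.exp A - 1) * (1 + Real.exp b)
      ≤ (Real.exp A - Real.exp (-A)) * (Real.exp b - 1) ∧
    ∀ p1 pm1 p0 : ℝ,
      p1 = (1 - Real.exp (-A)) * (Real.exp A - 1) /
        ((Real.exp A - Real.exp (-A)) * (Real.exp b - 1)) →
      pm1 = Real.exp b * p1 →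
      p0 = 1 - p1 - pm1 →
      p1 ∈ Set.Icc (0 : ℝ) 1 ∧ pm1 ∈ Set.Icc (0 : ℝ) 1 ∧ p0 ∈ Set.Icc (0 : ℝ) 1 ∧
        p1 + pm1 + p0 = 1 :=
  stmt6_general b A hA hAb
end

section
/- Let (Ω, F, P) be a probability space with a filtration (F_k)_{k=0,…,n} such that F₀ is P-trivial, and let (f_k)_{k=0}^n and (g_k)_{k=0}^n be integrable adapted real-valued processes with f_k ≤ g_k almost surely for every k. For stopping times ζ, η with values in {0,…,n} set H(ζ, η) = g_ζ 1_{ζ < η} + f_η 1_{η ≤ ζ}. Define J_n = f_n and, backwards for k = n−1,…,0, J_k = max(f_k, min(g_k, E[J_{k+1} | F_k])). Then inf_ζ sup_η E[H(ζ, η)] = sup_η inf_ζ E[H(ζ, η)] = E[J₀], where the infimum and supremum range over all stopping times with values in {0,…,n}; in particular the discrete Dynkin game has a value, given by the backward dynamic programming recursion. -/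
/-!
Extend `J` constantly after time `n` to a process `V`. The discrete optional stopping identity
`∫ V_τ - ∫ V_0 = ∑_{i<n} ∫_{i<τ} (E[V_{i+1} | F_i] - V_i)` shows that `V` loses expectation up to
the first time `ζ*` it meets the upper barrier `g` and gains expectation up to the first time
`η*` it meets the lower barrier `f`. Since `H(ζ*, η) ≤ V_{ζ* ∧ η}` and `V_{ζ ∧ η*} ≤ H(ζ, η*)`,
the pair `(ζ*, η*)` is a saddle point with value `E[J₀]`, and a saddle point of a bounded payoff
(here `|H| ≤ ∑_{j ≤ n} (|f_j| + |g_j|)`, which keeps `sSup`/`sInf` away from their junk values)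
makes both `inf sup` and `sup inf` equal to its value.
-/

open MeasureTheory Finset

lemma le_max_min_of_ne {α : Type*} [LinearOrder α] {a b c : α} (hab : a ≤ b)
    (h : max a (min b c) ≠ b) : c ≤ max a (min b c) := by
  grind

lemma max_min_le_of_ne {α : Type*} [LinearOrder α] {a b c : α}
    (h : max a (min b c) ≠ a) : max a (min b c) ≤ c := by
  grind

section Saddle

variable {α β : Type*} {p : α → Prop} {q : β → Prop} {P : α → β → ℝ} {a₀ : α} {b₀ : β} {v C : ℝ}

theorem sInf_sSup_eq_of_saddle (ha₀ : p a₀) (hb₀ : q b₀)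
    (hbdd : ∀ a b, p a → q b → |P a b| ≤ C)
    (ha₀v : ∀ b, q b → P a₀ b ≤ v) (hvb₀ : ∀ a, p a → v ≤ P a b₀) :
    sInf {x | ∃ a, p a ∧ x = sSup {y | ∃ b, q b ∧ y = P a b}} = v := by
  have hsup : ∀ a, p a → v ≤ sSup {y | ∃ b, q b ∧ y = P a b} := by
    intro a ha
    have hbddA : BddAbove {y | ∃ b, q b ∧ y = P a b} := by
      refine ⟨C, ?_⟩
      rintro _ ⟨b, hb, rfl⟩
      exact (le_abs_self _).trans (hbdd a b ha hb)
    exact (hvb₀ a ha).trans (le_csSup hbddA ⟨b₀, hb₀, rfl⟩)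
  have hbddB : BddBelow {x | ∃ a, p a ∧ x = sSup {y | ∃ b, q b ∧ y = P a b}} := by
    refine ⟨v, ?_⟩
    rintro _ ⟨a, ha, rfl⟩
    exact hsup a ha
  have ha₀sup : sSup {y | ∃ b, q b ∧ y = P a₀ b} ≤ v := by
    refine csSup_le ⟨_, b₀, hb₀, rfl⟩ ?_
    rintro _ ⟨b, hb, rfl⟩
    exact ha₀v b hb
  refine le_antisymm ((csInf_le hbddB ⟨a₀, ha₀, rfl⟩).trans ha₀sup) (le_csInf ⟨_, a₀, ha₀, rfl⟩ ?_)
  rintro _ ⟨a, ha, rfl⟩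
  exact hsup a ha

theorem sSup_sInf_eq_of_saddle (ha₀ : p a₀) (hb₀ : q b₀)
    (hbdd : ∀ a b, p a → q b → |P a b| ≤ C)
    (ha₀v : ∀ b, q b → P a₀ b ≤ v) (hvb₀ : ∀ a, p a → v ≤ P a b₀) :
    sSup {y | ∃ b, q b ∧ y = sInf {x | ∃ a, p a ∧ x = P a b}} = v := by
  have hinf : ∀ b, q b → sInf {x | ∃ a, p a ∧ x = P a b} ≤ v := by
    intro b hb
    have hbddB : BddBelow {x | ∃ a, p a ∧ x = P a b} := by
      refine ⟨-C, ?_⟩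
      rintro _ ⟨a, ha, rfl⟩
      exact neg_le_of_abs_le (hbdd a b ha hb)
    exact (csInf_le hbddB ⟨a₀, ha₀, rfl⟩).trans (ha₀v b hb)
  have hbddA : BddAbove {y | ∃ b, q b ∧ y = sInf {x | ∃ a, p a ∧ x = P a b}} := by
    refine ⟨v, ?_⟩
    rintro _ ⟨b, hb, rfl⟩
    exact hinf b hb
  have hb₀inf : v ≤ sInf {x | ∃ a, p a ∧ x = P a b₀} := by
    refine le_csInf ⟨_, a₀, ha₀, rfl⟩ ?_
    rintro _ ⟨a, ha, rfl⟩
    exact hvb₀ a ha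
  refine le_antisymm (csSup_le ⟨_, b₀, hb₀, rfl⟩ ?_) (hb₀inf.trans (le_csSup hbddA ⟨b₀, hb₀, rfl⟩))
  rintro _ ⟨b, hb, rfl⟩
  exact hinf b hb

end Saddle

section DynkinGame

variable {Ω : Type*} {m0 : MeasurableSpace Ω} {μ : Measure Ω} {ℱ : Filtration ℕ m0} {n : ℕ}

lemma integrable_stopped {X : ℕ → Ω → ℝ} (hX : ∀ k, Integrable (X k) μ) {τ : Ω → ℕ}
    (hτ : IsStoppingTime ℱ (fun ω => (τ ω : WithTop ℕ))) (hτn : ∀ ω, τ ω ≤ n) :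
    Integrable (fun ω => X (τ ω) ω) μ :=
  integrable_stoppedValue ℕ hτ hX (N := n) fun ω => WithTop.coe_le_coe.2 (hτn ω)

lemma measurableSet_lt_of_isStoppingTime {τ : Ω → ℕ}
    (hτ : IsStoppingTime ℱ (fun ω => (τ ω : WithTop ℕ))) (i : ℕ) :
    MeasurableSet[ℱ i] {ω | i < τ ω} := by
  simpa using hτ.measurableSet_gt i

lemma integral_stopped_sub_eq_sum [IsFiniteMeasure μ] {X : ℕ → Ω → ℝ}
    (hX : ∀ k, Integrable (X k) μ) {τ : Ω → ℕ}
    (hτ : IsStoppingTime ℱ (fun ω => (τ ω : WithTop ℕ))) (hτn : ∀ ω, τ ω ≤ n) :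
    ∫ ω, X (τ ω) ω ∂μ - ∫ ω, X 0 ω ∂μ
      = ∑ i ∈ range n, ∫ ω in {ω | i < τ ω}, (μ[X (i + 1) | ℱ i] ω - X i ω) ∂μ := by
  have hsum := stoppedValue_sub_eq_sum' (u := X) (τ := fun _ => (0 : ℕ∞))
    (π := fun ω => (τ ω : ℕ∞)) (fun ω => by simp) (N := n) (fun ω => by exact_mod_cast hτn ω)
  have hs := measurableSet_lt_of_isStoppingTime hτ
  rw [← integral_sub (integrable_stopped hX hτ hτn) (hX 0)]
  have hdecomp : (fun ω => X (τ ω) ω - X 0 ω)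
      = fun ω => ∑ i ∈ range n, {ω | i < τ ω}.indicator (X (i + 1) - X i) ω := by
    funext ω
    have h := congrFun hsum ω
    change X (τ ω) ω - X 0 ω = _ at h
    rw [h, Finset.sum_apply, sum_range_succ]
    simp [(hτn ω).not_gt]
  rw [hdecomp, integral_finsetSum _ fun i _ => ((hX _).sub (hX i)).indicator (ℱ.le i _ (hs i))]
  refine sum_congr rfl fun i _ => ?_
  rw [integral_indicator (ℱ.le i _ (hs i)), Pi.sub_def,
    integral_sub (hX _).integrableOn (hX i).integrableOn,
    integral_sub integrable_condExp.integrableOn (hX i).integrableOn,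
    setIntegral_condExp (ℱ.le i) (hX _) (hs i)]

lemma integral_stopped_le_of_condExp_le [IsFiniteMeasure μ] {X : ℕ → Ω → ℝ}
    (hX : ∀ k, Integrable (X k) μ) {τ : Ω → ℕ}
    (hτ : IsStoppingTime ℱ (fun ω => (τ ω : WithTop ℕ))) (hτn : ∀ ω, τ ω ≤ n)
    (hsuper : ∀ k < n, ∀ᵐ ω ∂μ, k < τ ω → μ[X (k + 1) | ℱ k] ω ≤ X k ω) :
    ∫ ω, X (τ ω) ω ∂μ ≤ ∫ ω, X 0 ω ∂μ := by
  have hterm : ∀ i ∈ range n, ∫ ω in {ω | i < τ ω}, (μ[X (i + 1) | ℱ i] ω - X i ω) ∂μ ≤ 0 :=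
    fun i hi => setIntegral_nonpos_ae (ℱ.le i _ (measurableSet_lt_of_isStoppingTime hτ i))
      ((hsuper i (mem_range.1 hi)).mono fun ω h hω => sub_nonpos.2 (h hω))
  linarith [integral_stopped_sub_eq_sum hX hτ hτn, sum_nonpos hterm]

lemma integral_le_integral_stopped_of_le_condExp [IsFiniteMeasure μ] {X : ℕ → Ω → ℝ}
    (hX : ∀ k, Integrable (X k) μ) {τ : Ω → ℕ}
    (hτ : IsStoppingTime ℱ (fun ω => (τ ω : WithTop ℕ))) (hτn : ∀ ω, τ ω ≤ n)
    (hsub : ∀ k < n, ∀ᵐ ω ∂μ, k < τ ω → X k ω ≤ μ[X (k + 1) | ℱ k] ω) :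
    ∫ ω, X 0 ω ∂μ ≤ ∫ ω, X (τ ω) ω ∂μ := by
  have hterm : ∀ i ∈ range n, 0 ≤ ∫ ω in {ω | i < τ ω}, (μ[X (i + 1) | ℱ i] ω - X i ω) ∂μ :=
    fun i hi => setIntegral_nonneg_ae (ℱ.le i _ (measurableSet_lt_of_isStoppingTime hτ i))
      ((hsub i (mem_range.1 hi)).mono fun ω h hω => sub_nonneg.2 (h hω))
  linarith [integral_stopped_sub_eq_sum hX hτ hτn, sum_nonneg hterm]

lemma measurable_of_isStoppingTime {τ : Ω → ℕ}
    (hτ : IsStoppingTime ℱ (fun ω => (τ ω : WithTop ℕ))) : Measurable τ :=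
  (measurable_of_countable (WithTop.untopD 0)).comp hτ.measurable'

def gamePayoff (f g : ℕ → Ω → ℝ) (ζ η : Ω → ℕ) (ω : Ω) : ℝ :=
  if ζ ω < η ω then g (ζ ω) ω else f (η ω) ω

section Payoff

variable {f g : ℕ → Ω → ℝ} {ζ η : Ω → ℕ}

lemma integrable_gamePayoff (hf : ∀ k, Integrable (f k) μ) (hg : ∀ k, Integrable (g k) μ)
    (hζ : IsStoppingTime ℱ (fun ω => (ζ ω : WithTop ℕ)))
    (hη : IsStoppingTime ℱ (fun ω => (η ω : WithTop ℕ)))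
    (hζn : ∀ ω, ζ ω ≤ n) (hηn : ∀ ω, η ω ≤ n) :
    Integrable (gamePayoff f g ζ η) μ :=
  Integrable.piecewise (s := {ω | ζ ω < η ω})
    (measurableSet_lt (measurable_of_isStoppingTime hζ) (measurable_of_isStoppingTime hη))
    (integrable_stopped hg hζ hζn).integrableOn (integrable_stopped hf hη hηn).integrableOn

lemma abs_gamePayoff_le (hζn : ∀ ω, ζ ω ≤ n) (hηn : ∀ ω, η ω ≤ n) (ω : Ω) :
    |gamePayoff f g ζ η ω| ≤ ∑ j ∈ range (n + 1), (|f j ω| + |g j ω|) := by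
  have hnn : ∀ j ∈ range (n + 1), 0 ≤ |f j ω| + |g j ω| := fun j _ => by positivity
  unfold gamePayoff
  split_ifs
  · exact (le_add_of_nonneg_left (abs_nonneg _)).trans
      (single_le_sum hnn (mem_range_succ_iff.2 (hζn ω)))
  · exact (le_add_of_nonneg_right (abs_nonneg _)).trans
      (single_le_sum hnn (mem_range_succ_iff.2 (hηn ω)))

lemma abs_integral_gamePayoff_le (hf : ∀ k, Integrable (f k) μ) (hg : ∀ k, Integrable (g k) μ)
    (hζ : IsStoppingTime ℱ (fun ω => (ζ ω : WithTop ℕ)))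
    (hη : IsStoppingTime ℱ (fun ω => (η ω : WithTop ℕ)))
    (hζn : ∀ ω, ζ ω ≤ n) (hηn : ∀ ω, η ω ≤ n) :
    |∫ ω, gamePayoff f g ζ η ω ∂μ| ≤ ∫ ω, ∑ j ∈ range (n + 1), (|f j ω| + |g j ω|) ∂μ :=
  (abs_integral_le_integral_abs).trans <| integral_mono
    (integrable_gamePayoff hf hg hζ hη hζn hηn).abs
    (integrable_finsetSum _ fun j _ => (hf j).abs.add (hg j).abs)
    (abs_gamePayoff_le hζn hηn)

end Payoff

def IsDynkinValueProcess (μ : Measure Ω) (ℱ : Filtration ℕ m0) (f g : ℕ → Ω → ℝ) (n : ℕ)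
    (V : ℕ → Ω → ℝ) : Prop :=
  V n = f n ∧ ∀ k < n, V k = fun ω => max (f k ω) (min (g k ω) (μ[V (k + 1) | ℱ k] ω))

namespace IsDynkinValueProcess

variable {f g V : ℕ → Ω → ℝ}

lemma measurable_integrable (hV : IsDynkinValueProcess μ ℱ f g n V)
    (hfa : Adapted ℱ f) (hga : Adapted ℱ g)
    (hfi : ∀ k, Integrable (f k) μ) (hgi : ∀ k, Integrable (g k) μ) {k : ℕ} (hk : k ≤ n) :
    Measurable[ℱ k] (V k) ∧ Integrable (V k) μ := by
  induction hk using Nat.decreasingInduction with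
  | self => exact hV.1 ▸ ⟨hfa n, hfi n⟩
  | of_succ k hk _ =>
    rw [hV.2 k hk]
    exact ⟨(hfa k).max ((hga k).min stronglyMeasurable_condExp.measurable),
      (hfi k).sup ((hgi k).inf integrable_condExp)⟩

lemma truncate (hV : IsDynkinValueProcess μ ℱ f g n V) :
    IsDynkinValueProcess μ ℱ f g n (fun k => V (min k n)) := by
  refine ⟨by simpa using hV.1, fun k hk => ?_⟩
  simp only [min_eq_left hk.le, min_eq_left (Nat.succ_le_of_lt hk)]
  exact hV.2 k hk

lemma lower_le (hV : IsDynkinValueProcess μ ℱ f g n V) {k : ℕ} (hk : k ≤ n) (ω : Ω) :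
    f k ω ≤ V k ω := by
  rcases hk.lt_or_eq with hk | rfl
  · rw [hV.2 k hk]
    exact le_max_left _ _
  · rw [hV.1]

lemma ae_le_upper (hV : IsDynkinValueProcess μ ℱ f g n V)
    (hfg : ∀ k, ∀ᵐ ω ∂μ, f k ω ≤ g k ω) : ∀ᵐ ω ∂μ, ∀ k ≤ n, V k ω ≤ g k ω := by
  filter_upwards [ae_all_iff.2 hfg] with ω hω k hk
  rcases hk.lt_or_eq with hk | rfl
  · rw [hV.2 k hk]
    exact max_le (hω k) (min_le_left _ _)
  · rw [hV.1]
    exact hω k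

lemma condExp_le_of_ne_upper (hV : IsDynkinValueProcess μ ℱ f g n V) {k : ℕ} (hk : k < n)
    (hfg : ∀ᵐ ω ∂μ, f k ω ≤ g k ω) :
    ∀ᵐ ω ∂μ, V k ω ≠ g k ω → μ[V (k + 1) | ℱ k] ω ≤ V k ω := by
  filter_upwards [hfg] with ω hω
  rw [hV.2 k hk]
  exact le_max_min_of_ne hω

lemma le_condExp_of_ne_lower (hV : IsDynkinValueProcess μ ℱ f g n V) {k : ℕ} (hk : k < n)
    (ω : Ω) (h : V k ω ≠ f k ω) : V k ω ≤ μ[V (k + 1) | ℱ k] ω := by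
  rw [hV.2 k hk] at h ⊢
  exact max_min_le_of_ne h

end IsDynkinValueProcess

noncomputable def firstEqTime (V F : ℕ → Ω → ℝ) (n : ℕ) : Ω → ℕ :=
  hittingBtwn (V - F) {0} 0 n

section FirstEqTime

variable {V F : ℕ → Ω → ℝ} {ω : Ω}

lemma isStoppingTime_firstEqTime (hV : Adapted ℱ V) (hF : Adapted ℱ F) :
    IsStoppingTime ℱ (fun ω => (firstEqTime V F n ω : WithTop ℕ)) :=
  (hV.sub hF).isStoppingTime_hittingBtwn (measurableSet_singleton 0)

lemma firstEqTime_le (ω : Ω) : firstEqTime V F n ω ≤ n :=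
  hittingBtwn_le ω

lemma ne_of_lt_firstEqTime {k : ℕ} (hk : k < firstEqTime V F n ω) : V k ω ≠ F k ω :=
  fun h => notMem_of_lt_hittingBtwn hk k.zero_le (sub_eq_zero.2 h)

lemma eq_at_firstEqTime (h : firstEqTime V F n ω < n) :
    V (firstEqTime V F n ω) ω = F (firstEqTime V F n ω) ω :=
  sub_eq_zero.1 (hittingBtwn_mem_set_of_hittingBtwn_lt h)

end FirstEqTime

section Game

variable [IsFiniteMeasure μ] {f g V : ℕ → Ω → ℝ}

theorem integral_gamePayoff_firstEqTime_le (hV : IsDynkinValueProcess μ ℱ f g n V)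
    (hVa : Adapted ℱ V) (hVi : ∀ k, Integrable (V k) μ) (hga : Adapted ℱ g)
    (hfi : ∀ k, Integrable (f k) μ) (hgi : ∀ k, Integrable (g k) μ)
    (hfg : ∀ k, ∀ᵐ ω ∂μ, f k ω ≤ g k ω) {η : Ω → ℕ}
    (hη : IsStoppingTime ℱ (fun ω => (η ω : WithTop ℕ))) (hηn : ∀ ω, η ω ≤ n) :
    ∫ ω, gamePayoff f g (firstEqTime V g n) η ω ∂μ ≤ ∫ ω, V 0 ω ∂μ := by
  set ζ := firstEqTime V g n
  have hζ : IsStoppingTime ℱ (fun ω => (ζ ω : WithTop ℕ)) := isStoppingTime_firstEqTime hVa hga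
  have hτ : IsStoppingTime ℱ (fun ω => (min (ζ ω) (η ω) : WithTop ℕ)) := hζ.min hη
  have hτn : ∀ ω, min (ζ ω) (η ω) ≤ n := fun ω => (min_le_right _ _).trans (hηn ω)
  have hle : ∀ ω, gamePayoff f g ζ η ω ≤ V (min (ζ ω) (η ω)) ω := by
    intro ω
    unfold gamePayoff
    split_ifs with h
    · rw [min_eq_left h.le, eq_at_firstEqTime (h.trans_le (hηn ω))]
    · rw [min_eq_right (not_lt.1 h)]
      exact hV.lower_le (hηn ω) ω
  calc ∫ ω, gamePayoff f g ζ η ω ∂μ ≤ ∫ ω, V (min (ζ ω) (η ω)) ω ∂μ :=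
        integral_mono (integrable_gamePayoff hfi hgi hζ hη (fun _ => firstEqTime_le _) hηn)
          (integrable_stopped hVi hτ hτn) hle
    _ ≤ ∫ ω, V 0 ω ∂μ := integral_stopped_le_of_condExp_le hVi hτ hτn fun k hk =>
        (hV.condExp_le_of_ne_upper hk (hfg k)).mono fun ω h hkτ =>
          h (ne_of_lt_firstEqTime (hkτ.trans_le (min_le_left _ _)))

theorem integral_le_integral_gamePayoff_firstEqTime (hV : IsDynkinValueProcess μ ℱ f g n V)
    (hVa : Adapted ℱ V) (hVi : ∀ k, Integrable (V k) μ) (hfa : Adapted ℱ f)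
    (hfi : ∀ k, Integrable (f k) μ) (hgi : ∀ k, Integrable (g k) μ)
    (hfg : ∀ k, ∀ᵐ ω ∂μ, f k ω ≤ g k ω) {ζ : Ω → ℕ}
    (hζ : IsStoppingTime ℱ (fun ω => (ζ ω : WithTop ℕ))) (hζn : ∀ ω, ζ ω ≤ n) :
    ∫ ω, V 0 ω ∂μ ≤ ∫ ω, gamePayoff f g ζ (firstEqTime V f n) ω ∂μ := by
  set η := firstEqTime V f n
  have hη : IsStoppingTime ℱ (fun ω => (η ω : WithTop ℕ)) := isStoppingTime_firstEqTime hVa hfa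
  have hτ : IsStoppingTime ℱ (fun ω => (min (ζ ω) (η ω) : WithTop ℕ)) := hζ.min hη
  have hτn : ∀ ω, min (ζ ω) (η ω) ≤ n := fun ω => (min_le_left _ _).trans (hζn ω)
  have hVη : ∀ ω, V (η ω) ω = f (η ω) ω := fun ω => by
    rcases (firstEqTime_le ω).lt_or_eq with h | h
    · exact eq_at_firstEqTime h
    · rw [show η ω = n from h, hV.1]
  have hle : ∀ᵐ ω ∂μ, V (min (ζ ω) (η ω)) ω ≤ gamePayoff f g ζ η ω := by
    filter_upwards [hV.ae_le_upper hfg] with ω hω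
    unfold gamePayoff
    split_ifs with h
    · rw [min_eq_left h.le]
      exact hω _ (hζn ω)
    · rw [min_eq_right (not_lt.1 h), hVη]
  calc ∫ ω, V 0 ω ∂μ ≤ ∫ ω, V (min (ζ ω) (η ω)) ω ∂μ :=
        integral_le_integral_stopped_of_le_condExp hVi hτ hτn fun k hk =>
          ae_of_all _ fun ω hkτ => hV.le_condExp_of_ne_lower hk ω
            (ne_of_lt_firstEqTime (hkτ.trans_le (min_le_right _ _)))
    _ ≤ ∫ ω, gamePayoff f g ζ η ω ∂μ :=
        integral_mono_ae (integrable_stopped hVi hτ hτn)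
          (integrable_gamePayoff hfi hgi hζ hη hζn (fun _ => firstEqTime_le _)) hle

end Game

end DynkinGame

theorem stmt11_general {Ω : Type*} {m0 : MeasurableSpace Ω} (μ : Measure Ω)
    [IsProbabilityMeasure μ]
    (ℱ : Filtration ℕ m0) (n : ℕ)
    (f g : ℕ → Ω → ℝ)
    (hfa : ∀ k, Measurable[ℱ k] (f k)) (hga : ∀ k, Measurable[ℱ k] (g k))
    (hfi : ∀ k, Integrable (f k) μ) (hgi : ∀ k, Integrable (g k) μ)
    (hfg : ∀ k, ∀ᵐ ω ∂μ, f k ω ≤ g k ω)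
    (J : ℕ → Ω → ℝ) (hJn : J n = f n)
    (hJ : ∀ k < n, J k = fun ω => max (f k ω) (min (g k ω) ((μ[J (k + 1) | ℱ k]) ω))) :
    sInf {x : ℝ | ∃ ζ : Ω → ℕ, IsStoppingTime ℱ (fun ω => (ζ ω : WithTop ℕ)) ∧ (∀ ω, ζ ω ≤ n) ∧
        x = sSup {y : ℝ | ∃ η : Ω → ℕ, IsStoppingTime ℱ (fun ω => (η ω : WithTop ℕ)) ∧ (∀ ω, η ω ≤ n) ∧
          y = ∫ ω, (if ζ ω < η ω then g (ζ ω) ω else f (η ω) ω) ∂μ}}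
      = ∫ ω, J 0 ω ∂μ ∧
    sSup {y : ℝ | ∃ η : Ω → ℕ, IsStoppingTime ℱ (fun ω => (η ω : WithTop ℕ)) ∧ (∀ ω, η ω ≤ n) ∧
        y = sInf {x : ℝ | ∃ ζ : Ω → ℕ, IsStoppingTime ℱ (fun ω => (ζ ω : WithTop ℕ)) ∧ (∀ ω, ζ ω ≤ n) ∧
          x = ∫ ω, (if ζ ω < η ω then g (ζ ω) ω else f (η ω) ω) ∂μ}}
      = ∫ ω, J 0 ω ∂μ := by
  have hJv : IsDynkinValueProcess μ ℱ f g n J := ⟨hJn, hJ⟩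
  -- `J k` is unconstrained for `k > n`; freezing it at time `n` makes it adapted and integrable.
  set V : ℕ → Ω → ℝ := fun k => J (min k n)
  have hV : IsDynkinValueProcess μ ℱ f g n V := hJv.truncate
  have hJreg := fun k => hJv.measurable_integrable hfa hga hfi hgi (min_le_right k n)
  have hVa : Adapted ℱ V := fun k => (hJreg k).1.mono (ℱ.mono (min_le_left k n)) le_rfl
  have hVi : ∀ k, Integrable (V k) μ := fun k => (hJreg k).2
  have hV0 : ∫ ω, J 0 ω ∂μ = ∫ ω, V 0 ω ∂μ := by simp [V]
  let p : (Ω → ℕ) → Prop := fun τ => IsStoppingTime ℱ (fun ω => (τ ω : WithTop ℕ)) ∧ ∀ ω, τ ω ≤ n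
  let P : (Ω → ℕ) → (Ω → ℕ) → ℝ := fun ζ η => ∫ ω, gamePayoff f g ζ η ω ∂μ
  have hseller : p (firstEqTime V g n) := ⟨isStoppingTime_firstEqTime hVa hga, firstEqTime_le⟩
  have hbuyer : p (firstEqTime V f n) := ⟨isStoppingTime_firstEqTime hVa hfa, firstEqTime_le⟩
  have hbound : ∀ ζ η, p ζ → p η → |P ζ η| ≤ ∫ ω, ∑ j ∈ range (n + 1), (|f j ω| + |g j ω|) ∂μ :=
    fun ζ η hζ hη => abs_integral_gamePayoff_le hfi hgi hζ.1 hη.1 hζ.2 hη.2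
  have hupper : ∀ η, p η → P (firstEqTime V g n) η ≤ ∫ ω, V 0 ω ∂μ := fun η hη =>
    integral_gamePayoff_firstEqTime_le hV hVa hVi hga hfi hgi hfg hη.1 hη.2
  have hlower : ∀ ζ, p ζ → ∫ ω, V 0 ω ∂μ ≤ P ζ (firstEqTime V f n) := fun ζ hζ =>
    integral_le_integral_gamePayoff_firstEqTime hV hVa hVi hfa hfi hgi hfg hζ.1 hζ.2
  simp only [hV0, ← and_assoc]
  exact ⟨sInf_sSup_eq_of_saddle (P := P) hseller hbuyer hbound hupper hlower,
    sSup_sInf_eq_of_saddle (P := P) hseller hbuyer hbound hupper hlower⟩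

/-- Discrete Dynkin game on `{0,…,n}` with `F₀` trivial, integrable
adapted payoffs `f_k ≤ g_k` a.s., payoff `H(ζ,η) = g_ζ 1_{ζ<η} + f_η 1_{η≤ζ}`, and
value processes `J_n = f_n`, `J_k = max(f_k, min(g_k, E[J_{k+1} | F_k]))`. Then
`inf_ζ sup_η E[H(ζ,η)] = sup_η inf_ζ E[H(ζ,η)] = E[J₀]`, the inf/sup ranging over
stopping times with values in `{0,…,n}`. -/
theorem stmt11 {Ω : Type*} {m0 : MeasurableSpace Ω} (μ : Measure Ω)
    [IsProbabilityMeasure μ]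
    (ℱ : Filtration ℕ m0) (n : ℕ)
    (htrivial : ∀ s : Set Ω, MeasurableSet[ℱ 0] s → μ s = 0 ∨ μ s = 1)
    (f g : ℕ → Ω → ℝ)
    (hfa : ∀ k, Measurable[ℱ k] (f k)) (hga : ∀ k, Measurable[ℱ k] (g k))
    (hfi : ∀ k, Integrable (f k) μ) (hgi : ∀ k, Integrable (g k) μ)
    (hfg : ∀ k, ∀ᵐ ω ∂μ, f k ω ≤ g k ω)
    (J : ℕ → Ω → ℝ) (hJn : J n = f n)
    (hJ : ∀ k < n, J k = fun ω => max (f k ω) (min (g k ω) ((μ[J (k + 1) | ℱ k]) ω))) :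
    sInf {x : ℝ | ∃ ζ : Ω → ℕ, IsStoppingTime ℱ (fun ω => (ζ ω : WithTop ℕ)) ∧ (∀ ω, ζ ω ≤ n) ∧
        x = sSup {y : ℝ | ∃ η : Ω → ℕ, IsStoppingTime ℱ (fun ω => (η ω : WithTop ℕ)) ∧ (∀ ω, η ω ≤ n) ∧
          y = ∫ ω, (if ζ ω < η ω then g (ζ ω) ω else f (η ω) ω) ∂μ}}
      = ∫ ω, J 0 ω ∂μ ∧
    sSup {y : ℝ | ∃ η : Ω → ℕ, IsStoppingTime ℱ (fun ω => (η ω : WithTop ℕ)) ∧ (∀ ω, η ω ≤ n) ∧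
        y = sInf {x : ℝ | ∃ ζ : Ω → ℕ, IsStoppingTime ℱ (fun ω => (ζ ω : WithTop ℕ)) ∧ (∀ ω, ζ ω ≤ n) ∧
          x = ∫ ω, (if ζ ω < η ω then g (ζ ω) ω else f (η ω) ω) ∂μ}}
      = ∫ ω, J 0 ω ∂μ :=
  stmt11_general μ ℱ n f g hfa hga hfi hgi hfg J hJn hJ
end
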